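/- arXiv:1607.03035 — 3 statements merged into one kernel-verified Lean document; each statement's English description precedes it below -/
import Mathlib

section
/- Let p, q > 1 with 1/p + 1/q = 1. Then the convex conjugate of φ_p equals φ_q; that is, for every y ∈ ℝ, sup_{x ∈ ℝ} (x·y − φ_p(x)) = φ_q(y). -/
open Real

/-- The quadratic `N`-function `φ_p`: `φ_p(x) = x²/2` for `|x| ≤ 1` and
`φ_p(x) = (1/p)|x|^p - 1/p + 1/2` for `|x| > 1`. -/
noncomputable def phi (p : ℝ) (x : ℝ) : ℝ :=
  if |x| ≤ 1 then x ^ 2 / 2 else (1 / p) * |x| ^ p - 1 / p + 1 / 2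

/-!
Young's inequality `x y ≤ φ_p(x) + φ_q(y)` gives `φ_p^* ≤ φ_q`. When `|x|, |y| > 1` it is the
classical Young inequality `|x| |y| ≤ |x|^p/p + |y|^q/q` shifted by constants, which cancel because
`1/p + 1/q = 1`; when one of `|x|, |y|` is at most `1` it follows from `φ_q(y) ≥ |y| - 1/2`, the
tangent line of `φ_q` at `1`. The supremum is attained: at `x = y` if `|y| ≤ 1`, and otherwise at
`x = y |y|^(q-2)`, where `|x|^p = |y|^q` is the equality case of Young's inequality.
-/

section

variable {p q x y : ℝ}

lemma phi_of_abs_le_one (p : ℝ) (hx : |x| ≤ 1) : phi p x = x ^ 2 / 2 := if_pos hx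

lemma phi_of_one_lt_abs (p : ℝ) (hx : 1 < |x|) : phi p x = |x| ^ p / p - 1 / p + 1 / 2 := by
  rw [phi, if_neg hx.not_ge, one_div_mul_eq_div]

lemma abs_sub_half_le_phi (hq : 1 ≤ q) (y : ℝ) : |y| - 1 / 2 ≤ phi q y := by
  rcases le_or_gt |y| 1 with hy | hy
  · rw [phi_of_abs_le_one q hy]
    nlinarith [sq_abs y, sq_nonneg (|y| - 1)]
  · have bernoulli : 1 + q * (|y| - 1) ≤ (1 + (|y| - 1)) ^ q :=
      one_add_mul_self_le_rpow_one_add (by linarith) hq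
    rw [add_sub_cancel] at bernoulli
    have : |y| - 1 ≤ (|y| ^ q - 1) / q := by
      rw [le_div_iff₀ (by linarith)]
      linarith
    rw [phi_of_one_lt_abs q hy]
    linarith [sub_div (|y| ^ q) 1 q]

lemma mul_le_sq_half_add_phi (hq : 1 ≤ q) (hx : |x| ≤ 1) (y : ℝ) :
    x * y ≤ x ^ 2 / 2 + phi q y := by
  rcases le_or_gt |y| 1 with hy | hy
  · rw [phi_of_abs_le_one q hy]
    nlinarith [sq_nonneg (x - y)]
  · have : x * y ≤ |x| * |y| := (le_abs_self _).trans_eq (abs_mul x y)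
    nlinarith [abs_sub_half_le_phi hq y, sq_abs x,
      mul_nonneg (sub_nonneg.2 hx) (sub_nonneg.2 hy.le)]

theorem mul_le_phi_add_phi (hpq : p.HolderConjugate q) (x y : ℝ) :
    x * y ≤ phi p x + phi q y := by
  rcases le_or_gt |x| 1 with hx | hx
  · rw [phi_of_abs_le_one p hx]
    exact mul_le_sq_half_add_phi hpq.symm.lt.le hx y
  rcases le_or_gt |y| 1 with hy | hy
  · rw [phi_of_abs_le_one q hy, mul_comm]
    linarith [mul_le_sq_half_add_phi hpq.lt.le hy x]
  rw [phi_of_one_lt_abs p hx, phi_of_one_lt_abs q hy]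
  linarith [young_inequality x y hpq, hpq.one_div_add_one_div]

theorem exists_mul_sub_phi_eq_phi (hpq : p.HolderConjugate q) (y : ℝ) :
    ∃ x, x * y - phi p x = phi q y := by
  rcases le_or_gt |y| 1 with hy | hy
  · refine ⟨y, ?_⟩
    rw [phi_of_abs_le_one p hy, phi_of_abs_le_one q hy]
    ring
  refine ⟨y * |y| ^ (q - 2), ?_⟩
  set x := y * |y| ^ (q - 2)
  have hy₀ : 0 < |y| := one_pos.trans hy
  have hx_abs : |x| = |y| ^ (q - 1) := by
    rw [abs_mul, abs_of_pos (rpow_pos_of_pos hy₀ _), ← rpow_one_add' hy₀.le (by linarith [hpq.symm.lt])]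
    ring_nf
  have hx : 1 < |x| := hx_abs ▸ one_lt_rpow hy (sub_pos.2 hpq.symm.lt)
  have hxy_nonneg : 0 ≤ x * y := by
    rw [mul_right_comm]
    exact mul_nonneg (mul_self_nonneg y) (rpow_nonneg hy₀.le _)
  have young_eq : |x| * |y| = |x| ^ p / p + |y| ^ q / q := by
    refine (young_inequality_eq_iff_of_nonneg (abs_nonneg x) hy₀.le hpq).2 ?_
    rw [hx_abs, ← rpow_mul hy₀.le, hpq.symm.sub_one_mul_conj]
  have hxy : x * y = |x| * |y| := by rw [← abs_mul, abs_of_nonneg hxy_nonneg]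
  rw [phi_of_one_lt_abs p hx, phi_of_one_lt_abs q hy, hxy, young_eq]
  linarith [hpq.one_div_add_one_div]

end

theorem conjugate_phi_p_eq_phi_q_general (p q : ℝ) (hp : 1 < p)
    (hpq : 1 / p + 1 / q = 1) (y : ℝ) :
    (⨆ x : ℝ, (x * y - phi p x)) = phi q y := by
  have hconj : p.HolderConjugate q := holderConjugate_iff.2 ⟨hp, by simpa only [one_div] using hpq⟩
  have hle : ∀ x, x * y - phi p x ≤ phi q y := fun x => by
    linarith [mul_le_phi_add_phi hconj x y]
  obtain ⟨x₀, hx₀⟩ := exists_mul_sub_phi_eq_phi hconj y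
  exact le_antisymm (ciSup_le hle) (hx₀ ▸ le_ciSup ⟨_, Set.forall_mem_range.2 hle⟩ x₀)

/-- For `p, q > 1` with `1/p + 1/q = 1`, the convex conjugate of `φ_p` is `φ_q`:
for every `y`, `sup_{x ∈ ℝ} (x·y − φ_p(x)) = φ_q(y)`. -/
theorem conjugate_phi_p_eq_phi_q (p q : ℝ) (hp : 1 < p) (hq : 1 < q)
    (hpq : 1 / p + 1 / q = 1) (y : ℝ) :
    (⨆ x : ℝ, (x * y - phi p x)) = phi q y :=
  conjugate_phi_p_eq_phi_q_general p q hp hpq y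
end

section
/- (Main Theorem) Let p > 1 and let (ξ_n)_{n≥1} be a sequence of real random variables on a common probability space with τ_{φ_p}(ξ_n) < ∞ for each n. Suppose there exist positive constants c and α such that for every natural number n, τ_{φ_p}(∑_{i=1}^n ξ_i) ≤ c·n^{1−α}. Then n^{−1} ∑_{i=1}^n ξ_i converges to 0 almost surely as n → ∞. -/
/-!
A Chernoff bound with `λ = 1 / (a + 1)`, where `a` is an admissible constant for the partial sum
`S n`, gives `P(|S n| ≥ ε n) ≤ 2 exp (1/2 - ε n / (a + 1))`, because `φ_p ≤ 1/2` on `[-1, 1]`.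
Taking `a ≤ τ(S n) + 1 = O(n ^ (1 - β))` with `β = min α 1 > 0`, these tail probabilities are
bounded by `exp (-δ n ^ β)`, which is summable, and Borel–Cantelli yields `S n / n → 0` a.s.
-/

open MeasureTheory Real Filter
open scoped ENNReal

/-- The set of admissible constants in the definition of the `φ`-subgaussian standard:
`{a ≥ 0 : ∀ λ, ln E exp(λξ) ≤ φ(aλ)}` (the exponentiated form of the inequality also
encodes finiteness of `E exp(λξ)`). -/
def subSet {Ω : Type*} [MeasurableSpace Ω] (μ : Measure Ω) (φ : ℝ → ℝ) (ξ : Ω → ℝ) :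
    Set ℝ :=
  {a | 0 ≤ a ∧ ∀ l : ℝ,
    ∫⁻ ω, ENNReal.ofReal (Real.exp (l * ξ ω)) ∂μ ≤ ENNReal.ofReal (Real.exp (φ (a * l)))}

/-- The `φ`-subgaussian standard (norm) `τ_φ(ξ)`. -/
noncomputable def tau {Ω : Type*} [MeasurableSpace Ω] (μ : Measure Ω) (φ : ℝ → ℝ)
    (ξ : Ω → ℝ) : ℝ :=
  sInf (subSet μ φ ξ)

lemma phi_neg (p x : ℝ) : phi p (-x) = phi p x := by
  simp only [phi, abs_neg, neg_sq]

lemma phi_le_half (p : ℝ) {x : ℝ} (hx : |x| ≤ 1) : phi p x ≤ 1 / 2 := by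
  rw [phi, if_pos hx]
  nlinarith [sq_abs x, abs_nonneg x]

lemma summable_exp_neg_mul_rpow {δ β : ℝ} (hδ : 0 < δ) (hβ : 0 < β) :
    Summable fun n : ℕ => exp (-(δ * (n : ℝ) ^ β)) := by
  have hpow : Tendsto (fun n : ℕ => (n : ℝ) ^ β) atTop atTop :=
    (tendsto_rpow_atTop hβ).comp tendsto_natCast_atTop_atTop
  -- `exp (-δ x) = o(x ^ (-2 / β))`, evaluated at `x = n ^ β`
  have hlo := ((isLittleO_exp_neg_mul_rpow_atTop hδ (-2 / β)).comp_tendsto hpow).isBigO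
  refine summable_of_isBigO_nat (summable_nat_rpow.2 (by norm_num : (-2 : ℝ) < -1)) ?_
  refine (hlo.congr_left fun n => by simp [neg_mul]).congr_right fun n => ?_
  simp only [Function.comp_apply]
  rw [← rpow_mul n.cast_nonneg, mul_div_cancel₀ _ hβ.ne']

section

variable {Ω : Type*} [MeasurableSpace Ω] {μ : Measure Ω} {φ : ℝ → ℝ} {f : Ω → ℝ} {a : ℝ}

lemma mem_subSet_neg (hφ : ∀ x, φ (-x) = φ x) (ha : a ∈ subSet μ φ f) :
    a ∈ subSet μ φ (-f) := by
  refine ⟨ha.1, fun l => ?_⟩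
  simpa only [Pi.neg_apply, mul_neg, neg_mul, hφ] using ha.2 (-l)

lemma measure_ge_le_exp_of_mem_subSet (hf : Measurable f) (ha : a ∈ subSet μ φ f)
    {l : ℝ} (hl : 0 ≤ l) (t : ℝ) :
    μ {ω | t ≤ f ω} ≤ ENNReal.ofReal (exp (φ (a * l) - l * t)) := by
  have markov : ENNReal.ofReal (exp (l * t)) * μ {ω | t ≤ f ω} ≤
      ENNReal.ofReal (exp (φ (a * l))) :=
    calc ENNReal.ofReal (exp (l * t)) * μ {ω | t ≤ f ω}
        ≤ ENNReal.ofReal (exp (l * t)) *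
            μ {ω | ENNReal.ofReal (exp (l * t)) ≤ ENNReal.ofReal (exp (l * f ω))} := by
          refine mul_le_mul_right (measure_mono fun ω hω => ?_) _
          exact ENNReal.ofReal_le_ofReal (exp_le_exp.2 (mul_le_mul_of_nonneg_left hω hl))
      _ ≤ ∫⁻ ω, ENNReal.ofReal (exp (l * f ω)) ∂μ :=
          mul_meas_ge_le_lintegral₀ (hf.const_mul l).exp.ennreal_ofReal.aemeasurable _
      _ ≤ ENNReal.ofReal (exp (φ (a * l))) := ha.2 l
  rw [exp_sub, ENNReal.ofReal_div_of_pos (exp_pos _),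
    ENNReal.le_div_iff_mul_le (Or.inl (by positivity)) (Or.inl ENNReal.ofReal_ne_top), mul_comm]
  exact markov

lemma measure_abs_ge_le_of_mem_subSet_phi {p : ℝ} (hf : Measurable f)
    (ha : a ∈ subSet μ (phi p) f) (t : ℝ) :
    μ {ω | t ≤ |f ω|} ≤ 2 * ENNReal.ofReal (exp (1 / 2 - t / (a + 1))) := by
  have ha1 : 0 < a + 1 := by linarith [ha.1]
  have one_sided {g : Ω → ℝ} (hg : Measurable g) (hag : a ∈ subSet μ (phi p) g) :
      μ {ω | t ≤ g ω} ≤ ENNReal.ofReal (exp (1 / 2 - t / (a + 1))) := by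
    refine (measure_ge_le_exp_of_mem_subSet hg hag (inv_pos.2 ha1).le t).trans ?_
    have hφ : phi p (a * (a + 1)⁻¹) ≤ 1 / 2 := by
      refine phi_le_half p ?_
      rw [← div_eq_mul_inv, abs_div, abs_of_nonneg ha.1, abs_of_pos ha1, div_le_one ha1]
      linarith
    gcongr
    exact (inv_mul_eq_div _ _).ge
  have hunion : {ω | t ≤ |f ω|} = {ω | t ≤ f ω} ∪ {ω | t ≤ (-f) ω} := by
    ext ω
    simp [le_abs]
  calc μ {ω | t ≤ |f ω|} ≤ μ {ω | t ≤ f ω} + μ {ω | t ≤ (-f) ω} :=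
        hunion ▸ measure_union_le _ _
    _ ≤ _ := by
        rw [two_mul]
        exact add_le_add (one_sided hf ha) (one_sided hf.neg (mem_subSet_neg (phi_neg p) ha))

theorem ae_tendsto_inv_mul_of_tsum_measure_ne_top {S : ℕ → Ω → ℝ}
    (h : ∀ ε > 0, ∑' n : ℕ, μ {ω | ε * n ≤ |S n ω|} ≠ ∞) :
    ∀ᵐ ω ∂μ, Tendsto (fun n : ℕ => (n : ℝ)⁻¹ * S n ω) atTop (nhds 0) := by
  have hk (k : ℕ) : ∀ᵐ ω ∂μ, ∀ᶠ n in atTop, ω ∉ {ω | 1 / ((k : ℝ) + 1) * n ≤ |S n ω|} :=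
    ae_eventually_notMem (h _ (by positivity))
  filter_upwards [ae_all_iff.2 hk] with ω hω
  refine Metric.tendsto_nhds.2 fun ε hε => ?_
  obtain ⟨k, hkε⟩ := exists_nat_one_div_lt hε
  filter_upwards [hω k, eventually_gt_atTop 0] with n hn hn0
  have hn0' : (0 : ℝ) < n := Nat.cast_pos.2 hn0
  simp only [not_le] at hn
  rw [dist_zero_right, norm_mul, norm_inv, norm_natCast, Real.norm_eq_abs, inv_mul_lt_iff₀ hn0']
  linarith [mul_lt_mul_of_pos_right hkε hn0']

lemma tsum_measure_abs_ge_ne_top [IsFiniteMeasure μ] {p C β ε : ℝ} {S : ℕ → Ω → ℝ} (hS : ∀ n, Measurable (S n))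
    (hC : 0 < C) (hβ : 0 < β)
    (hsub : ∀ n : ℕ, 1 ≤ n → ∃ a ∈ subSet μ (phi p) (S n), a + 1 ≤ C * (n : ℝ) ^ (1 - β))
    (hε : 0 < ε) :
    ∑' n : ℕ, μ {ω | ε * n ≤ |S n ω|} ≠ ∞ := by
  set g : ℕ → ℝ := fun n => exp (1 / 2) * exp (-(ε / C * (n : ℝ) ^ β))
  have tail (n : ℕ) (hn : 1 ≤ n) : μ {ω | ε * n ≤ |S n ω|} ≤ 2 * ENNReal.ofReal (g n) := by
    obtain ⟨a, ha, haC⟩ := hsub n hn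
    refine (measure_abs_ge_le_of_mem_subSet_phi (hS n) ha _).trans ?_
    have hn1 : (1 : ℝ) ≤ n := Nat.one_le_cast.2 hn
    have ha1 : 0 < a + 1 := by linarith [ha.1]
    have hsplit : (n : ℝ) ^ β * (n : ℝ) ^ (1 - β) = n := by
      rw [← rpow_add (by linarith), add_sub_cancel, rpow_one]
    have hpos : 0 < (n : ℝ) ^ (1 - β) := rpow_pos_of_pos (by linarith) _
    have key : ε / C * (n : ℝ) ^ β ≤ ε * n / (a + 1) :=
      calc ε / C * (n : ℝ) ^ β
          = ε * ((n : ℝ) ^ β * (n : ℝ) ^ (1 - β)) / (C * (n : ℝ) ^ (1 - β)) := by field_simp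
        _ = ε * n / (C * (n : ℝ) ^ (1 - β)) := by rw [hsplit]
        _ ≤ ε * n / (a + 1) := by gcongr
    simp only [g, ← exp_add]
    gcongr
    linarith
  have hg : Summable fun n => g (n + 1) :=
    (summable_nat_add_iff 1).2 ((summable_exp_neg_mul_rpow (div_pos hε hC) hβ).mul_left _)
  have htail : ∑' n : ℕ, μ {ω | ε * (n + 1 : ℕ) ≤ |S (n + 1) ω|} ≠ ∞ := by
    refine ne_top_of_le_ne_top ?_ (ENNReal.tsum_le_tsum fun n => tail (n + 1) n.succ_pos)
    rw [ENNReal.tsum_mul_left, ← ENNReal.ofReal_tsum_of_nonneg (fun n => by positivity) hg]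
    exact ENNReal.mul_ne_top ENNReal.ofNat_ne_top ENNReal.ofReal_ne_top
  exact fun h => htail (ENNReal.tsum_add_one_eq_top h (measure_ne_top _ _))

end

theorem slln_phi_subgaussian_general
    {Ω : Type*} [MeasurableSpace Ω] (μ : Measure Ω) [IsProbabilityMeasure μ]
    (p : ℝ)
    (ξ : ℕ → Ω → ℝ) (hmeas : ∀ n, Measurable (ξ n))
    (hsubsum : ∀ n : ℕ, 1 ≤ n → (subSet μ (phi p) (fun ω => ∑ i ∈ Finset.Icc 1 n, ξ i ω)).Nonempty)
    (c α : ℝ) (hc : 0 < c) (hα : 0 < α)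
    (hτ : ∀ n : ℕ, 1 ≤ n →
      tau μ (phi p) (fun ω => ∑ i ∈ Finset.Icc 1 n, ξ i ω) ≤ c * (n : ℝ) ^ ((1 : ℝ) - α)) :
    ∀ᵐ ω ∂μ, Tendsto (fun n : ℕ => (n : ℝ)⁻¹ * ∑ i ∈ Finset.Icc 1 n, ξ i ω)
      atTop (nhds 0) := by
  set S : ℕ → Ω → ℝ := fun n ω => ∑ i ∈ Finset.Icc 1 n, ξ i ω
  have hS (n : ℕ) : Measurable (S n) := Finset.measurable_sum _ fun i _ => hmeas i
  -- `β = min α 1` makes `n ^ (1 - β) ≥ 1`, so it absorbs the additive constants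
  set β := min α 1
  have hsubS (n : ℕ) (hn : 1 ≤ n) :
      ∃ a ∈ subSet μ (phi p) (S n), a + 1 ≤ (c + 2) * (n : ℝ) ^ (1 - β) := by
    obtain ⟨a, ha, ha_lt⟩ :=
      exists_lt_of_csInf_lt (hsubsum n hn) ((hτ n hn).trans_lt (lt_add_one _))
    have hn1 : (1 : ℝ) ≤ n := Nat.one_le_cast.2 hn
    have hα_le : (n : ℝ) ^ (1 - α) ≤ (n : ℝ) ^ (1 - β) :=
      rpow_le_rpow_of_exponent_le hn1 (by linarith [min_le_left α 1])
    have hone_le : 1 ≤ (n : ℝ) ^ (1 - β) := one_le_rpow hn1 (by linarith [min_le_right α 1])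
    refine ⟨a, ha, ?_⟩
    linarith [mul_le_mul_of_nonneg_left hα_le hc.le]
  exact ae_tendsto_inv_mul_of_tsum_measure_ne_top fun ε hε =>
    tsum_measure_abs_ge_ne_top hS (by linarith) (lt_min hα one_pos) hsubS hε

/-- Main theorem: if `(ξ_n) ⊂ Sub_{φ_p}` for some `p > 1` and there are constants
`c, α > 0` such that `τ_{φ_p}(∑_{i=1}^n ξ_i) ≤ c·n^{1−α}` for every `n`, then
`n⁻¹ ∑_{i=1}^n ξ_i → 0` almost surely. -/
theorem slln_phi_subgaussian
    {Ω : Type*} [MeasurableSpace Ω] (μ : Measure Ω) [IsProbabilityMeasure μ]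
    (p : ℝ) (hp : 1 < p)
    (ξ : ℕ → Ω → ℝ) (hmeas : ∀ n, Measurable (ξ n))
    (hsub : ∀ n, (subSet μ (phi p) (ξ n)).Nonempty)
    (hsubsum : ∀ n : ℕ, 1 ≤ n → (subSet μ (phi p) (fun ω => ∑ i ∈ Finset.Icc 1 n, ξ i ω)).Nonempty)
    (c α : ℝ) (hc : 0 < c) (hα : 0 < α)
    (hτ : ∀ n : ℕ, 1 ≤ n →
      tau μ (phi p) (fun ω => ∑ i ∈ Finset.Icc 1 n, ξ i ω) ≤ c * (n : ℝ) ^ ((1 : ℝ) - α)) :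
    ∀ᵐ ω ∂μ, Tendsto (fun n : ℕ => (n : ℝ)⁻¹ * ∑ i ∈ Finset.Icc 1 n, ξ i ω)
      atTop (nhds 0) :=
  slln_phi_subgaussian_general μ p ξ hmeas hsubsum c α hc hα hτ
end

section
/- For p > 1 and r = min{p, 2}, the function x ↦ φ_p(|x|^{1/r}) is convex on ℝ. -/
/-!
On `[0, ∞)` the profile `h t = φ_p(t^{1/r})` is `t^{2/r}/2` on `[0, 1]` and
`(t^{p/r} - 1)/p + 1/2` on `[1, ∞)`. Both exponents are at least `1` exactly because
`r = min{p, 2}`, and both pieces have slope `1/r` at `t = 1`, so `h'` is nonnegative and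
nondecreasing: `h` is convex and nondecreasing on `[0, ∞)`, hence `h ∘ |·|` is convex.
-/

open Real

open Set

theorem continuous_phi (p : ℝ) : Continuous (phi p) := by
  refine continuous_if_le continuous_abs continuous_const (by fun_prop) ?_ ?_
  · refine ((ContinuousOn.rpow_const continuous_abs.continuousOn ?_).const_smul (1 / p)).sub
      continuousOn_const |>.add continuousOn_const
    exact fun x hx => Or.inl (one_pos.trans_le hx).ne'
  · intro x hx
    rw [← sq_abs, hx]
    norm_num

theorem ConvexOn.comp_norm {E : Type*} [SeminormedAddCommGroup E] [NormedSpace ℝ E]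
    {g : ℝ → ℝ} (hg : ConvexOn ℝ (Ici 0) g) (hg_mono : MonotoneOn g (Ici 0)) :
    ConvexOn ℝ univ (fun x : E => g ‖x‖) := by
  refine ⟨convex_univ, fun x _ y _ a b ha hb hab => ?_⟩
  calc g ‖a • x + b • y‖ ≤ g (a * ‖x‖ + b * ‖y‖) := by
        refine hg_mono (norm_nonneg _) (mem_Ici.2 (by positivity)) ?_
        simpa [norm_smul, abs_of_nonneg ha, abs_of_nonneg hb] using norm_add_le (a • x) (b • y)
    _ ≤ a * g ‖x‖ + b * g ‖y‖ := hg.2 (norm_nonneg x) (norm_nonneg y) ha hb hab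

noncomputable def phiRpowDeriv (p r t : ℝ) : ℝ :=
  (if t ≤ 1 then t ^ (2 / r - 1) else t ^ (p / r - 1)) / r

section Profile

variable {p r t : ℝ}

theorem continuous_phi_rpow (hr : 0 ≤ r) : Continuous (fun t => phi p (t ^ (1 / r))) :=
  (continuous_phi p).comp (continuous_rpow_const (by positivity))

theorem phi_rpow_of_le_one (hr : 0 ≤ r) (ht0 : 0 ≤ t) (ht1 : t ≤ 1) :
    phi p (t ^ (1 / r)) = t ^ (2 / r) / 2 := by
  have hu0 : 0 ≤ t ^ (1 / r) := rpow_nonneg ht0 _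
  have hu1 : t ^ (1 / r) ≤ 1 := rpow_le_one ht0 ht1 (by positivity)
  rw [phi, if_pos (by rwa [abs_of_nonneg hu0]), ← rpow_natCast, ← rpow_mul ht0]
  norm_num [div_eq_inv_mul]

theorem phi_rpow_of_one_le (hr : 0 < r) (ht : 1 ≤ t) :
    phi p (t ^ (1 / r)) = (t ^ (p / r) - 1) / p + 1 / 2 := by
  rcases ht.eq_or_lt with rfl | ht
  · simp [phi]
  have hu1 : 1 < t ^ (1 / r) := one_lt_rpow ht (by positivity)
  rw [phi, abs_of_pos (one_pos.trans hu1), if_neg hu1.not_ge, ← rpow_mul (one_pos.trans ht).le,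
    one_div_mul_eq_div r p]
  ring

theorem hasDerivAt_phi_rpow (hp : p ≠ 0) (hr : 0 < r) (ht : 0 < t) :
    HasDerivAt (fun s => phi p (s ^ (1 / r))) (phiRpowDeriv p r t) t := by
  have hleft : ∀ s ≠ 0, HasDerivAt (fun s => s ^ (2 / r) / 2) (s ^ (2 / r - 1) / r) s :=
    fun s hs => ((hasDerivAt_rpow_const (Or.inl hs)).div_const 2).congr_deriv (by ring)
  have hright : ∀ s ≠ 0, HasDerivAt (fun s => (s ^ (p / r) - 1) / p + 1 / 2)
      (s ^ (p / r - 1) / r) s := fun s hs =>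
    ((((hasDerivAt_rpow_const (Or.inl hs)).sub_const 1).div_const p).add_const _).congr_deriv
      (by field_simp)
  rcases lt_trichotomy t 1 with ht1 | rfl | ht1
  · rw [phiRpowDeriv, if_pos ht1.le]
    refine (hleft t ht.ne').congr_of_eventuallyEq ?_
    filter_upwards [Ioo_mem_nhds ht ht1] with s hs
    exact phi_rpow_of_le_one hr.le hs.1.le hs.2.le
  · have hIcc : HasDerivWithinAt (fun s => phi p (s ^ (1 / r))) (1 / r) (Icc 0 1) 1 := by
      refine ((hleft 1 one_ne_zero).hasDerivWithinAt.congr (fun s hs => ?_) ?_).congr_deriv ?_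
      · exact phi_rpow_of_le_one hr.le hs.1 hs.2
      · exact phi_rpow_of_le_one hr.le zero_le_one le_rfl
      · simp
    have hIci : HasDerivWithinAt (fun s => phi p (s ^ (1 / r))) (1 / r) (Ici 1) 1 := by
      refine ((hright 1 one_ne_zero).hasDerivWithinAt.congr (fun s hs => ?_) ?_).congr_deriv ?_
      · exact phi_rpow_of_one_le hr hs
      · exact phi_rpow_of_one_le hr le_rfl
      · simp
    have hIci0 := hIcc.union hIci
    rw [Icc_union_Ici_eq_Ici zero_le_one] at hIci0
    simpa [phiRpowDeriv] using hIci0.hasDerivAt (Ici_mem_nhds one_pos)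
  · rw [phiRpowDeriv, if_neg ht1.not_ge]
    refine (hright t ht.ne').congr_of_eventuallyEq ?_
    filter_upwards [Ioi_mem_nhds ht1] with s hs
    exact phi_rpow_of_one_le hr hs.le

theorem phiRpowDeriv_nonneg (hr : 0 < r) (ht : 0 ≤ t) : 0 ≤ phiRpowDeriv p r t := by
  unfold phiRpowDeriv
  split_ifs <;> positivity

theorem monotoneOn_phiRpowDeriv (hr : 0 < r) (hr2 : r ≤ 2) (hrp : r ≤ p) :
    MonotoneOn (phiRpowDeriv p r) (Ici 0) := by
  have h2 : 0 ≤ 2 / r - 1 := by rw [sub_nonneg, le_div_iff₀ hr]; linarith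
  have hp : 0 ≤ p / r - 1 := by rw [sub_nonneg, le_div_iff₀ hr]; linarith
  intro x hx y hy hxy
  unfold phiRpowDeriv
  gcongr ?_ / r
  split_ifs with hx1 hy1 hy1
  · exact rpow_le_rpow hx hxy h2
  · exact (rpow_le_one hx hx1 h2).trans (one_le_rpow (not_le.1 hy1).le hp)
  · exact absurd (hxy.trans hy1) hx1
  · exact rpow_le_rpow hx hxy hp

theorem differentiableOn_phi_rpow (hp : p ≠ 0) (hr : 0 < r) :
    DifferentiableOn ℝ (fun t => phi p (t ^ (1 / r))) (Ioi 0) :=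
  fun _ ht => (hasDerivAt_phi_rpow hp hr ht).differentiableAt.differentiableWithinAt

theorem convexOn_phi_rpow (hr : 0 < r) (hr2 : r ≤ 2) (hrp : r ≤ p) :
    ConvexOn ℝ (Ici 0) (fun t => phi p (t ^ (1 / r))) := by
  have hp : p ≠ 0 := (hr.trans_le hrp).ne'
  refine MonotoneOn.convexOn_of_deriv (convex_Ici 0) (continuous_phi_rpow hr.le).continuousOn
    (by simpa using differentiableOn_phi_rpow hp hr) ?_
  rw [interior_Ici]
  intro x hx y hy hxy
  rw [(hasDerivAt_phi_rpow hp hr hx).deriv, (hasDerivAt_phi_rpow hp hr hy).deriv]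
  exact monotoneOn_phiRpowDeriv hr hr2 hrp (mem_Ici.2 hx.le) (mem_Ici.2 hy.le) hxy

theorem monotoneOn_phi_rpow (hp : p ≠ 0) (hr : 0 < r) :
    MonotoneOn (fun t => phi p (t ^ (1 / r))) (Ici 0) := by
  refine monotoneOn_of_deriv_nonneg (convex_Ici 0) (continuous_phi_rpow hr.le).continuousOn
    (by simpa using differentiableOn_phi_rpow hp hr) ?_
  rw [interior_Ici]
  exact fun t ht => (hasDerivAt_phi_rpow hp hr ht).deriv ▸ phiRpowDeriv_nonneg hr (le_of_lt ht)

end Profile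

/-- For `p > 1` and `r = min{p, 2}`, the function `x ↦ φ_p(|x|^{1/r})` is convex on `ℝ`. -/
theorem convexOn_phi_abs_rpow (p r : ℝ) (hp : 1 < p) (hr : r = min p 2) :
    ConvexOn ℝ Set.univ (fun x : ℝ => phi p (|x| ^ (1 / r))) := by
  have hr0 : 0 < r := hr ▸ lt_min (zero_lt_one.trans hp) two_pos
  have hrp : r ≤ p := hr ▸ min_le_left p 2
  exact (convexOn_phi_rpow hr0 (hr ▸ min_le_right p 2) hrp).comp_norm
    (monotoneOn_phi_rpow (hr0.trans_le hrp).ne' hr0)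
end
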